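/- Let (P, ≤) be a well-founded partial order and let P = P₁ ⊔ P₂ be a partition of its domain. Then rank(P) ≤ rank(P↾P₁) ⊕ rank(P↾P₂), where ⊕ is the natural (Hessenberg) sum of ordinals. -/

import Mathlib

/-- Natural (Hessenberg) addition of ordinals, as defined in the older Mathlib
(`Mathlib/SetTheory/Ordinal/NaturalOps.lean`), which no longer contains it. -/
noncomputable def Ordinal.nadd (a b : Ordinal) : Ordinal :=
  max (⨆ x : Set.Iio a, Order.succ (Ordinal.nadd x.1 b))
    (⨆ x : Set.Iio b, Order.succ (Ordinal.nadd a x.1))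
termination_by (a, b)
decreasing_by
  · exact Prod.Lex.left _ _ x.2
  · exact Prod.Lex.right _ x.2

namespace NaturalOps

infixl:65 " ♯ " => Ordinal.nadd

end NaturalOps

open NaturalOps

universe u

/-- The ordinal rank of an element of a well-founded partial order:
`rank p = sup { rank p' + 1 | p' < p }`. -/
noncomputable def elRank {P : Type u} [PartialOrder P] [WellFoundedLT P] (p : P) :
    Ordinal.{u} :=
  IsWellFounded.rank (α := P) (· < ·) p

/-- The ordinal rank of a well-founded partial order:
`rank P = sup { rank p + 1 | p ∈ P }` (with `sup ∅ = 0`). -/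
noncomputable def ordRank (P : Type u) [PartialOrder P] [WellFoundedLT P] : Ordinal.{u} :=
  ⨆ p : P, elRank p + 1

/-!
Write `rank_S p` (`rankBelow S p`) for the supremum of `rank_{P↾S} q + 1` over `q ∈ S` with
`q < p`, the rank `p` "sees" inside `S`. By well-founded induction,
`rank p ≤ rank_{P₁} p ♯ rank_{P₂} p`: a predecessor `q < p` lies in `P₁` (say), so
`rank_{P₁} q < rank_{P₁} p` while `rank_{P₂} q ≤ rank_{P₂} p`, and `♯` is strictly monotone in
each argument. Finally `rank_S p < rank(P↾S)` when `p ∈ S` and `rank_S p ≤ rank(P↾S)` always, so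
every `rank p` lies below `rank(P↾P₁) ♯ rank(P↾P₂)`.
-/

namespace Ordinal

theorem nadd_left_strictMono (b : Ordinal.{u}) :
    StrictMono fun a : Ordinal.{u} => (a ♯ b : Ordinal.{u}) := fun a a' h => by
  change (a ♯ b : Ordinal.{u}) < a' ♯ b
  rw [nadd.eq_1 a' b]
  refine (Order.lt_succ _).trans_le (le_max_of_le_left ?_)
  exact Ordinal.le_iSup (fun x : Set.Iio a' => Order.succ (x.1 ♯ b : Ordinal.{u})) ⟨a, h⟩

theorem nadd_right_strictMono (a : Ordinal.{u}) :
    StrictMono fun b : Ordinal.{u} => (a ♯ b : Ordinal.{u}) := fun b b' h => by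
  change (a ♯ b : Ordinal.{u}) < a ♯ b'
  rw [nadd.eq_1 a b']
  refine (Order.lt_succ _).trans_le (le_max_of_le_right ?_)
  exact Ordinal.le_iSup (fun x : Set.Iio b' => Order.succ (a ♯ x.1 : Ordinal.{u})) ⟨b, h⟩

theorem nadd_lt_nadd_of_lt_of_le {a a' b b' : Ordinal.{u}} (ha : a < a') (hb : b ≤ b') :
    (a ♯ b : Ordinal.{u}) < a' ♯ b' :=
  (nadd_left_strictMono b ha).trans_le ((nadd_right_strictMono a').monotone hb)

theorem nadd_lt_nadd_of_le_of_lt {a a' b b' : Ordinal.{u}} (ha : a ≤ a') (hb : b < b') :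
    (a ♯ b : Ordinal.{u}) < a' ♯ b' :=
  (nadd_right_strictMono a hb).trans_le ((nadd_left_strictMono b').monotone ha)

end Ordinal

section RankBelow

variable {P : Type u} [PartialOrder P] [WellFoundedLT P]

theorem succ_elRank_le_ordRank (p : P) : Order.succ (elRank p) ≤ ordRank P := by
  rw [Order.succ_eq_add_one]
  exact Ordinal.le_iSup (fun p : P => elRank p + 1) p

noncomputable def rankBelow (S : Set P) (p : P) : Ordinal.{u} :=
  ⨆ q : {q : S // (q : P) < p}, Order.succ (elRank q.1)

theorem rankBelow_mono (S : Set P) : Monotone (rankBelow S) := fun _ p' h =>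
  Ordinal.iSup_le fun q =>
    Ordinal.le_iSup (fun q : {q : S // (q : P) < p'} => Order.succ (elRank q.1))
      ⟨q.1, q.2.trans_le h⟩

theorem rankBelow_coe (S : Set P) (q : S) : rankBelow S q = elRank q := by
  rw [elRank, IsWellFounded.rank_eq]
  rfl

theorem elRank_lt_rankBelow {S : Set P} {q : S} {p : P} (h : (q : P) < p) :
    elRank q < rankBelow S p :=
  Order.succ_le_iff.mp <|
    Ordinal.le_iSup (fun q : {q : S // (q : P) < p} => Order.succ (elRank q.1)) ⟨q, h⟩

theorem rankBelow_lt_rankBelow {S : Set P} {q p : P} (hq : q ∈ S) (h : q < p) :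
    rankBelow S q < rankBelow S p :=
  (rankBelow_coe S ⟨q, hq⟩).trans_lt (elRank_lt_rankBelow h)

theorem rankBelow_le_ordRank (S : Set P) (p : P) : rankBelow S p ≤ ordRank S :=
  Ordinal.iSup_le fun q => succ_elRank_le_ordRank q.1

theorem rankBelow_lt_ordRank {S : Set P} {p : P} (hp : p ∈ S) : rankBelow S p < ordRank S := by
  rw [rankBelow_coe S ⟨p, hp⟩]
  exact Order.succ_le_iff.mp (succ_elRank_le_ordRank _)

theorem elRank_le_rankBelow_nadd {P₁ P₂ : Set P} (hcover : P₁ ∪ P₂ = Set.univ) (p : P) :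
    elRank p ≤ rankBelow P₁ p ♯ rankBelow P₂ p := by
  induction p using WellFoundedLT.induction with
  | ind p ih =>
  rw [elRank, IsWellFounded.rank_eq]
  refine Ordinal.iSup_le fun ⟨q, hqp⟩ => Order.succ_le_of_lt ((ih q hqp).trans_lt ?_)
  rcases hcover.symm.subset (Set.mem_univ q) with hq | hq
  · exact Ordinal.nadd_lt_nadd_of_lt_of_le (rankBelow_lt_rankBelow hq hqp)
      (rankBelow_mono P₂ hqp.le)
  · exact Ordinal.nadd_lt_nadd_of_le_of_lt (rankBelow_mono P₁ hqp.le)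
      (rankBelow_lt_rankBelow hq hqp)

end RankBelow

theorem rank_le_nadd_of_partition_general {P : Type u} [PartialOrder P] [WellFoundedLT P]
    (P₁ P₂ : Set P) (hcover : P₁ ∪ P₂ = Set.univ) :
    ordRank P ≤ ordRank ↥P₁ ♯ ordRank ↥P₂ := by
  refine Ordinal.iSup_le fun p => ?_
  rw [← Order.succ_eq_add_one, Order.succ_le_iff]
  refine (elRank_le_rankBelow_nadd hcover p).trans_lt ?_
  rcases hcover.symm.subset (Set.mem_univ p) with hp | hp
  · exact Ordinal.nadd_lt_nadd_of_lt_of_le (rankBelow_lt_ordRank hp) (rankBelow_le_ordRank P₂ p)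
  · exact Ordinal.nadd_lt_nadd_of_le_of_lt (rankBelow_le_ordRank P₁ p) (rankBelow_lt_ordRank hp)

/-- If a well-founded partial order `P` is partitioned into `P₁ ⊔ P₂`, then
`rank P ≤ rank (P↾P₁) ♯ rank (P↾P₂)`, where `♯` is the natural (Hessenberg) sum. -/
theorem rank_le_nadd_of_partition {P : Type u} [PartialOrder P] [WellFoundedLT P]
    (P₁ P₂ : Set P) (hdisj : Disjoint P₁ P₂) (hcover : P₁ ∪ P₂ = Set.univ) :
    ordRank P ≤ ordRank ↥P₁ ♯ ordRank ↥P₂ :=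
  rank_le_nadd_of_partition_general P₁ P₂ hcover
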